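/- Let Φ : (S,·) → (T,·) be a semigroup homomorphism such that Φ(S) is piecewise syndetic in T. If A ⊆ S is central in S, then Φ(A) is central in T. -/

import Mathlib

universe u v

/-- A subset `A` of a semigroup `T` is *piecewise syndetic* if there is a finite nonempty
`G ⊆ T` such that for every finite nonempty `F ⊆ T` there is `x ∈ T` with
`F·x ⊆ ⋃_{t ∈ G} t⁻¹A`, where `t⁻¹A = {y | t·y ∈ A}`. -/
def MulPiecewiseSyndetic {T : Type u} [Mul T] (A : Set T) : Prop :=
  ∃ G : Finset T, G.Nonempty ∧ ∀ F : Finset T, F.Nonempty →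
    ∃ x : T, ∀ f ∈ F, ∃ t ∈ G, t * (f * x) ∈ A

/-- A family `𝒜` of subsets of a semigroup `T` is *collectionwise piecewise syndetic* if
there exist functions `K` from the finite nonempty subfamilies of `𝒜` to the finite
nonempty subsets of `T`, and `x` from (finite nonempty subfamilies of `𝒜`) × (finite
nonempty subsets of `T`) to `T`, such that for every finite nonempty `F ⊆ T` and all
finite nonempty subfamilies `ℱ ⊆ ℋ` of `𝒜` one has
`F·x(ℋ,F) ⊆ ⋃_{t ∈ K(ℱ)} t⁻¹(⋂ℱ)`. -/
def MulCollectionwisePS {T : Type u} [Mul T] (𝒜 : Set (Set T)) : Prop :=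
  ∃ (K : {ℱ : Finset (Set T) // ℱ.Nonempty ∧ (↑ℱ : Set (Set T)) ⊆ 𝒜} →
        {B : Finset T // B.Nonempty})
    (x : {ℱ : Finset (Set T) // ℱ.Nonempty ∧ (↑ℱ : Set (Set T)) ⊆ 𝒜} →
        {F : Finset T // F.Nonempty} → T),
    ∀ (F : {F : Finset T // F.Nonempty})
      (ℱ ℋ : {ℱ : Finset (Set T) // ℱ.Nonempty ∧ (↑ℱ : Set (Set T)) ⊆ 𝒜}),
      ℱ.1 ⊆ ℋ.1 →
      ∀ f ∈ F.1, ∃ t ∈ (K ℱ).1, t * (f * x ℋ F) ∈ ⋂₀ (↑ℱ.1 : Set (Set T))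

/-- A subset `A` of a semigroup `T` is *central* if there is a downward directed family
`⟨C_i⟩_{i ∈ I}` of subsets of `A` (here `r i j` means `i ≥ j`, `(I,≥)` is a directed set
and `i ≥ j → C_i ⊆ C_j`) such that (1) for each `i ∈ I` and `x ∈ C_i` there is `j ∈ I`
with `C_j ⊆ x⁻¹C_i`, and (2) the family `{C_i : i ∈ I}` is collectionwise piecewise
syndetic in `T`. -/
def MulCentral {T : Type u} [Mul T] (A : Set T) : Prop :=
  ∃ (I : Type u) (r : I → I → Prop) (C : I → Set T),
    Nonempty I ∧ (∀ i, r i i) ∧ (∀ i j k, r i j → r j k → r i k) ∧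
    (∀ i j, ∃ k, r k i ∧ r k j) ∧ (∀ i j, r i j → C i ⊆ C j) ∧
    (∀ i, C i ⊆ A) ∧
    (∀ i, ∀ x ∈ C i, ∃ j, C j ⊆ {y | x * y ∈ C i}) ∧
    MulCollectionwisePS (Set.range C)

/-!
Forget the indexing in the definition of centrality and work with families of sets directed
under `⊇`; the image under `Φ` of such a family witnesses centrality of `Φ(A)`. Directedness,
containment and the shift property pass through the homomorphism directly. For collectionwise
piecewise syndeticity, given `F ⊆ T` translate `F` by some `z` into `⋃_{g ∈ G} g⁻¹Φ(S)`, lift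
each `g_f f z` to some `s_f ∈ S`, and apply the property in `S` to the finite set `{s_f}`: with
`x = z Φ(x_S)` and `K = Φ(K_S) G` one has `Φ(u) g_f f x = Φ(u s_f x_S)`.
-/

open Pointwise

variable {S : Type u} {T : Type v}

abbrev FinSubfamily (𝒜 : Set (Set T)) : Type v :=
  {ℱ : Finset (Set T) // ℱ.Nonempty ∧ (↑ℱ : Set (Set T)) ⊆ 𝒜}

theorem exists_finSubfamily_lift (Φ : S → T) (𝒜 : Set (Set S)) :
    ∃ L : FinSubfamily (Set.image Φ '' 𝒜) → FinSubfamily 𝒜,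
      (∀ ℱ ℋ, ℱ.1 ⊆ ℋ.1 → (L ℱ).1 ⊆ (L ℋ).1) ∧
      ∀ ℱ, Φ '' ⋂₀ ↑(L ℱ).1 ⊆ ⋂₀ ↑ℱ.1 := by
  classical
  set pre := Function.invFunOn (Set.image Φ) 𝒜
  have hpre : ∀ B ∈ Set.image Φ '' 𝒜, pre B ∈ 𝒜 ∧ Φ '' pre B = B := fun B hB =>
    ⟨Function.invFunOn_mem hB, Function.invFunOn_eq hB⟩
  refine ⟨fun ℱ => ⟨ℱ.1.image pre, ℱ.2.1.image pre, ?_⟩,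
    fun ℱ ℋ h => Finset.image_subset_image h, fun ℱ => ?_⟩
  · simp only [Finset.coe_image, Set.image_subset_iff]
    exact fun B hB => (hpre B (ℱ.2.2 hB)).1
  · refine Set.subset_sInter fun B hB => ?_
    rw [← (hpre B (ℱ.2.2 hB)).2]
    exact Set.image_mono <|
      Set.sInter_subset_of_mem (Finset.mem_coe.2 (Finset.mem_image_of_mem pre hB))

theorem MulPiecewiseSyndetic.nonempty [Mul T] {A : Set T} (hA : MulPiecewiseSyndetic A) :
    A.Nonempty := by
  obtain ⟨G, hG, hGF⟩ := hA
  obtain ⟨g, hg⟩ := hG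
  obtain ⟨x, hx⟩ := hGF {g} (Finset.singleton_nonempty g)
  obtain ⟨t, -, ht⟩ := hx g (Finset.mem_singleton_self g)
  exact ⟨_, ht⟩

theorem MulCollectionwisePS.image [Semigroup S] [Semigroup T] (Φ : S →ₙ* T)
    (hrange : MulPiecewiseSyndetic (Set.range Φ)) {𝒜 : Set (Set S)}
    (h𝒜 : MulCollectionwisePS 𝒜) : MulCollectionwisePS (Set.image Φ '' 𝒜) := by
  classical
  obtain ⟨_, s₀, -⟩ := hrange.nonempty
  have : Nonempty S := ⟨s₀⟩
  obtain ⟨G, hG, hGF⟩ := hrange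
  have : Nonempty T := ⟨hG.choose⟩
  obtain ⟨K, x, hKx⟩ := h𝒜
  obtain ⟨L, hL_mono, hL_image⟩ := exists_finSubfamily_lift Φ 𝒜
  choose z hz using fun F : {F : Finset T // F.Nonempty} => hGF F.1 F.2
  choose! g hgG s hs using hz
  let liftF (F : {F : Finset T // F.Nonempty}) : {F : Finset S // F.Nonempty} :=
    ⟨F.1.image (s F), F.2.image _⟩
  refine ⟨fun ℱ => ⟨(K (L ℱ)).1.image Φ * G, (K (L ℱ)).2.image Φ |>.mul hG⟩,
    fun ℋ F => z F * Φ (x (L ℋ) (liftF F)), fun F ℱ ℋ hℱℋ f hf => ?_⟩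
  obtain ⟨u, hu, hux⟩ := hKx (liftF F) (L ℱ) (L ℋ) (hL_mono ℱ ℋ hℱℋ) (s F f)
    (Finset.mem_image_of_mem _ hf)
  refine ⟨Φ u * g F f, Finset.mul_mem_mul (Finset.mem_image_of_mem Φ hu) (hgG F f hf),
    hL_image ℱ ⟨_, hux, ?_⟩⟩
  rw [map_mul, map_mul, hs F f hf]
  simp only [mul_assoc]

/-- The data of `MulCentral` with the family indexed by itself; unlike an index type, a family
of subsets of `T` lives in the universe of `T`, so it can be pushed forward along `Φ : S → T`. -/
structure IsMulCentralFamily [Mul T] (A : Set T) (𝒞 : Set (Set T)) : Prop where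
  nonempty : 𝒞.Nonempty
  directedOn : DirectedOn (· ⊇ ·) 𝒞
  subset : ∀ C ∈ 𝒞, C ⊆ A
  exists_subset_preimage_mul : ∀ C ∈ 𝒞, ∀ x ∈ C, ∃ D ∈ 𝒞, D ⊆ (x * ·) ⁻¹' C
  collectionwisePS : MulCollectionwisePS 𝒞

theorem mulCentral_iff_exists_isMulCentralFamily [Mul T] {A : Set T} :
    MulCentral A ↔ ∃ 𝒞, IsMulCentralFamily A 𝒞 := by
  constructor
  · rintro ⟨I, r, C, hI, -, -, hdir, hmono, hsub, hshift, hps⟩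
    refine ⟨Set.range C, ⟨Set.range_nonempty C, ?_, ?_, ?_, hps⟩⟩
    · refine directedOn_range.2 fun i j => ?_
      obtain ⟨k, hki, hkj⟩ := hdir i j
      exact ⟨k, hmono k i hki, hmono k j hkj⟩
    · exact Set.forall_mem_range.2 hsub
    · refine Set.forall_mem_range.2 fun i x hx => ?_
      obtain ⟨j, hj⟩ := hshift i x hx
      exact ⟨C j, Set.mem_range_self j, hj⟩
  · rintro ⟨𝒞, h𝒞⟩
    refine ⟨𝒞, fun C D => (C : Set T) ⊆ D, Subtype.val, h𝒞.nonempty.to_subtype,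
      fun _ => subset_rfl, fun _ _ _ => Set.Subset.trans, fun C D => ?_, fun _ _ => id,
      fun C => h𝒞.subset C C.2, fun C x hx => ?_,
      by rw [Subtype.range_coe]; exact h𝒞.collectionwisePS⟩
    · obtain ⟨E, hE, hEC, hED⟩ := h𝒞.directedOn C C.2 D D.2
      exact ⟨⟨E, hE⟩, hEC, hED⟩
    · obtain ⟨D, hD, hDC⟩ := h𝒞.exists_subset_preimage_mul C C.2 x hx
      exact ⟨⟨D, hD⟩, hDC⟩

theorem IsMulCentralFamily.image [Semigroup S] [Semigroup T] (Φ : S →ₙ* T)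
    (hrange : MulPiecewiseSyndetic (Set.range Φ)) {A : Set S} {𝒞 : Set (Set S)}
    (h𝒞 : IsMulCentralFamily A 𝒞) : IsMulCentralFamily (Φ '' A) (Set.image Φ '' 𝒞) where
  nonempty := h𝒞.nonempty.image _
  directedOn := directedOn_image.2 (h𝒞.directedOn.mono fun _ _ => Set.image_mono)
  subset := Set.forall_mem_image.2 fun C hC => Set.image_mono (h𝒞.subset C hC)
  exists_subset_preimage_mul := by
    rintro _ ⟨C, hC, rfl⟩ _ ⟨x, hx, rfl⟩
    obtain ⟨D, hD, hDC⟩ := h𝒞.exists_subset_preimage_mul C hC x hx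
    refine ⟨Φ '' D, Set.mem_image_of_mem _ hD, ?_⟩
    rintro _ ⟨y, hy, rfl⟩
    exact ⟨x * y, hDC hy, map_mul Φ x y⟩
  collectionwisePS := h𝒞.collectionwisePS.image Φ hrange

/-- If `Φ : S → T` is a semigroup homomorphism such that `Φ(S)` is piecewise syndetic in
`T`, and `A ⊆ S` is central in `S`, then `Φ(A)` is central in `T`. -/
theorem mulCentral_image_of_mulCentral {S : Type u} {T : Type v}
    [Semigroup S] [Semigroup T] (Φ : S → T)
    (hΦ : ∀ x y : S, Φ (x * y) = Φ x * Φ y)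
    (hrange : MulPiecewiseSyndetic (Set.range Φ))
    (A : Set S) (hA : MulCentral A) : MulCentral (Φ '' A) := by
  obtain ⟨𝒞, h𝒞⟩ := mulCentral_iff_exists_isMulCentralFamily.1 hA
  exact mulCentral_iff_exists_isMulCentralFamily.2 ⟨_, h𝒞.image ⟨Φ, hΦ⟩ hrange⟩
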